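/- With the notation of the inflow boundary condition system α v = g, (1 - α)(v - v_∞) = ℓ with ℓ > 0 and v_∞ ≥ 0 fixed: the unique solution branch α(g) ∈ (0,1), v(g) > v_∞ (with v given by the larger root of the quadratic v² - (g + ℓ + v_∞)v + g v_∞ = 0 and α = g/v) satisfies that α(g) is strictly increasing in g on (0,∞) and α(g) → 0 as g → 0⁺. -/

import Mathlib

open Filter Topology

/-- Monotonicity of the boundary gas fraction α(g) in the normalized gas
influx g, and α(g) → 0 as g → 0⁺, where v(g) is the larger root of
v² - (g+ℓ+v_∞)v + g v_∞ = 0 and α(g) = g / v(g). -/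
theorem stmt3 (ℓ vinf : ℝ) (hℓ : 0 < ℓ) (hvinf : 0 ≤ vinf)
    (v α : ℝ → ℝ)
    (hv : ∀ g : ℝ, v g = ((g + ℓ + vinf) + Real.sqrt ((g + ℓ + vinf) ^ 2 - 4 * g * vinf)) / 2)
    (hα : ∀ g : ℝ, α g = g / v g) :
    StrictMonoOn α (Set.Ioi 0) ∧
    Tendsto α (𝓝[>] 0) (𝓝 0) := by
  -- key per-point facts
  have key : ∀ g : ℝ, 0 < g → g < v g ∧ (v g) ^ 2 = (g + ℓ + vinf) * v g - g * vinf := by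
    intro g hg
    have hDpos : 0 < (g + ℓ + vinf) ^ 2 - 4 * g * vinf := by nlinarith [sq_nonneg (g - ℓ - vinf), mul_pos hg hℓ]
    have hs : Real.sqrt ((g + ℓ + vinf) ^ 2 - 4 * g * vinf) ^ 2
        = (g + ℓ + vinf) ^ 2 - 4 * g * vinf := Real.sq_sqrt hDpos.le
    have h1 : (g - ℓ - vinf) ^ 2 < (g + ℓ + vinf) ^ 2 - 4 * g * vinf := by nlinarith
    have hsgt : g - ℓ - vinf < Real.sqrt ((g + ℓ + vinf) ^ 2 - 4 * g * vinf) := by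
      have h2 := Real.sqrt_lt_sqrt (sq_nonneg (g - ℓ - vinf)) h1
      rw [Real.sqrt_sq_eq_abs] at h2
      linarith [le_abs_self (g - ℓ - vinf)]
    constructor
    · rw [hv g]; linarith
    · rw [hv g]; nlinarith [hs]
  have main : ∀ g : ℝ, 0 < g → 0 < α g ∧ α g < 1 ∧
      (1 - α g) * g = α g * ℓ + α g * vinf * (1 - α g) := by
    intro g hg
    obtain ⟨hgv, hq⟩ := key g hg
    have hv0 : 0 < v g := lt_trans hg hgv
    have ha : α g = g / v g := hα g
    have h1 : 0 < α g := by rw [ha]; positivity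
    have h2 : α g < 1 := by rw [ha, div_lt_one hv0]; exact hgv
    refine ⟨h1, h2, ?_⟩
    rw [ha]
    field_simp
    linear_combination hq
  constructor
  · intro g1 hg1 g2 hg2 h12
    simp only [Set.mem_Ioi] at hg1 hg2
    obtain ⟨ha1, hb1, he1⟩ := main g1 hg1
    obtain ⟨ha2, hb2, he2⟩ := main g2 hg2
    by_contra hcon
    push_neg at hcon
    have hab : α g2 ≤ α g1 := hcon
    have hid : (1 - α g1) * (1 - α g2) * (g1 - g2)
        = ℓ * (α g1 - α g2) + vinf * ((1 - α g1) * (1 - α g2) * (α g1 - α g2)) := by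
      linear_combination (1 - α g2) * he1 - (1 - α g1) * he2
    nlinarith [mul_pos (by linarith : (0:ℝ) < 1 - α g1) (by linarith : (0:ℝ) < 1 - α g2),
      mul_nonneg (mul_nonneg (by linarith : (0:ℝ) ≤ 1 - α g1) (by linarith : (0:ℝ) ≤ 1 - α g2))
        (by linarith : (0:ℝ) ≤ α g1 - α g2),
      mul_nonneg hℓ.le (by linarith : (0:ℝ) ≤ α g1 - α g2)]
  · have hc : Continuous (fun g : ℝ =>
        ((g + ℓ + vinf) + Real.sqrt ((g + ℓ + vinf) ^ 2 - 4 * g * vinf)) / 2) := by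
      fun_prop
    have hveq : v = fun g : ℝ =>
        ((g + ℓ + vinf) + Real.sqrt ((g + ℓ + vinf) ^ 2 - 4 * g * vinf)) / 2 := funext hv
    have h0 : ((0 + ℓ + vinf) + Real.sqrt ((0 + ℓ + vinf) ^ 2 - 4 * 0 * vinf)) / 2 = ℓ + vinf := by
      rw [show ((0:ℝ) + ℓ + vinf) ^ 2 - 4 * 0 * vinf = (ℓ + vinf) ^ 2 by ring,
        Real.sqrt_sq (by linarith)]
      ring
    have hvt : Tendsto v (𝓝[>] (0:ℝ)) (𝓝 (ℓ + vinf)) := by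
      rw [hveq]
      have := hc.tendsto 0
      rw [h0] at this
      exact this.mono_left nhdsWithin_le_nhds
    have hgt : Tendsto (fun g : ℝ => g) (𝓝[>] (0:ℝ)) (𝓝 0) :=
      tendsto_id.mono_left nhdsWithin_le_nhds
    have hne : ℓ + vinf ≠ 0 := by linarith
    have := hgt.div hvt hne
    simp only [zero_div] at this
    have hαeq : α = fun g : ℝ => g / v g := funext hα
    rw [hαeq]
    exact this
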